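/- For the friendship graph F_n (n ≥ 1 triangles sharing a common vertex, order 2n+1), the coefficient polynomial of x^1 in da(F_n; x, y) equals 2n·y^{2n−1} + y. Conversely, if a simple graph H satisfies that the coefficient of x^1 in da(H; x, y) equals 2n·y^{2n−1} + y, then H has 2n+1 vertices with degree sequence consisting of one vertex of degree 2n and 2n vertices of degree 2. -/

import Mathlib

open Polynomial Finset

open scoped Classical

variable {V : Type*}

/-- `f_y(S) = min_{u ∈ S} (deg_S(u) - deg_{S̄}(u) + n)`, computed in ℕ as
`deg_S(u) + n - deg_{S̄}(u)` (no truncation occurs since `deg_{S̄}(u) ≤ n`). -/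
noncomputable def fy [Fintype V] (G : SimpleGraph V) (S : Finset V) : ℕ :=
  sInf ((fun u => (S.filter (fun v => G.Adj u v)).card + Fintype.card V
      - (Sᶜ.filter (fun v => G.Adj u v)).card) '' (S : Set V))

/-- The defensive alliance polynomial, as a polynomial in `x` (the outer variable)
with coefficients that are polynomials in `y`. -/
noncomputable def da [Fintype V] (G : SimpleGraph V) : Polynomial (Polynomial ℤ) :=
  ∑ S ∈ (Finset.univ : Finset V).powerset,
    if S.Nonempty ∧ (G.induce (S : Set V)).Connected then
      Polynomial.monomial S.card (Polynomial.monomial (fy G S) (1 : ℤ))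
    else 0

/-- The friendship graph `Fₙ`: a center (`none`) joined to `n` disjoint edges. -/
def friendshipGraph (n : ℕ) : SimpleGraph (Option (Fin n × Bool)) :=
  SimpleGraph.fromRel (fun a b =>
    a = none ∨ ∃ i : Fin n, a = some (i, false) ∧ b = some (i, true))

lemma fy_singleton [Fintype V] (G : SimpleGraph V) (v : V) :
    fy G {v} = Fintype.card V - G.degree v := by
  unfold fy
  rw [Finset.coe_singleton, Set.image_singleton, csInf_singleton]
  have h1 : ({v} : Finset V).filter (fun w => G.Adj v w) = ∅ := by
    rw [Finset.filter_singleton, if_neg (G.loopless.irrefl v)]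
  have h2 : (({v} : Finset V)ᶜ).filter (fun w => G.Adj v w) = G.neighborFinset v := by
    ext w
    simp [SimpleGraph.mem_neighborFinset, and_comm]
    intro h; exact (G.ne_of_adj h).symm
  rw [h1, h2, Finset.card_empty, zero_add]
  rfl

lemma singleton_connected [Fintype V] (G : SimpleGraph V) (v : V) :
    (G.induce (({v} : Finset V) : Set V)).Connected := by
  rw [Finset.coe_singleton]
  have : Nonempty ({v} : Set V) := ⟨⟨v, rfl⟩⟩
  refine ⟨fun a b => ?_⟩
  have : a = b := Subtype.ext (a.2.trans b.2.symm)
  exact this ▸ SimpleGraph.Reachable.refl a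

lemma coeff_one_da [Fintype V] (G : SimpleGraph V) :
    (da G).coeff 1 = ∑ v : V, Polynomial.monomial (Fintype.card V - G.degree v) (1 : ℤ) := by
  unfold da
  rw [Polynomial.finset_sum_coeff]
  rw [show ∑ v : V, Polynomial.monomial (Fintype.card V - G.degree v) (1 : ℤ)
      = ∑ S ∈ Finset.univ.powersetCard 1, Polynomial.monomial (fy G S) (1 : ℤ) by
    rw [Finset.powersetCard_one, Finset.sum_map]
    refine Finset.sum_congr rfl fun v _ => ?_
    simp [fy_singleton]]
  rw [Finset.powersetCard_eq_filter, Finset.sum_filter]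
  refine Finset.sum_congr rfl fun S hS => ?_
  by_cases h1 : S.card = 1
  · obtain ⟨v, rfl⟩ := Finset.card_eq_one.mp h1
    rw [if_pos ⟨Finset.singleton_nonempty v, singleton_connected G v⟩, if_pos (by simp)]
    simp [Polynomial.coeff_monomial]
  · rw [if_neg h1]
    split
    · rw [Polynomial.coeff_monomial, if_neg (by omega)]
    · simp

lemma card_friendship (n : ℕ) : Fintype.card (Option (Fin n × Bool)) = 2 * n + 1 := by
  simp [Fintype.card_option, mul_comm]

lemma friendship_degree_none (n : ℕ) : (friendshipGraph n).degree none = 2 * n := by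
  have h : (friendshipGraph n).neighborFinset none = ({none} : Finset (Option (Fin n × Bool)))ᶜ := by
    ext b
    rw [SimpleGraph.mem_neighborFinset]; simp [friendshipGraph, SimpleGraph.fromRel_adj, eq_comm]
  rw [SimpleGraph.degree, h, Finset.card_compl, Finset.card_singleton, card_friendship]; omega

lemma friendship_adj_some (n : ℕ) (i : Fin n) (b : Bool) (c : Option (Fin n × Bool)) :
    (friendshipGraph n).Adj (some (i, b)) c ↔ c = none ∨ c = some (i, !b) := by
  rw [friendshipGraph, SimpleGraph.fromRel_adj]
  constructor
  · rintro ⟨hne, (h | ⟨k, hk1, hk2⟩) | (h | ⟨k, hk1, hk2⟩)⟩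
    · exact absurd h (by simp)
    · simp only [Option.some_inj, Prod.mk.injEq] at hk1
      obtain ⟨rfl, rfl⟩ := hk1
      exact Or.inr (by simp [hk2])
    · exact Or.inl h
    · simp only [Option.some_inj, Prod.mk.injEq] at hk2
      obtain ⟨rfl, rfl⟩ := hk2
      exact Or.inr (by simp [hk1])
  · rintro (rfl | rfl)
    · exact ⟨by simp, Or.inr (Or.inl rfl)⟩
    · refine ⟨by simp, ?_⟩
      cases b
      · exact Or.inl (Or.inr ⟨i, rfl, rfl⟩)
      · exact Or.inr (Or.inr ⟨i, rfl, rfl⟩)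

lemma friendship_degree_some (n : ℕ) (i : Fin n) (b : Bool) :
    (friendshipGraph n).degree (some (i, b)) = 2 := by
  have h : (friendshipGraph n).neighborFinset (some (i, b))
      = {none, some (i, !b)} := by
    ext c
    simp [SimpleGraph.mem_neighborFinset, friendship_adj_some]
  rw [SimpleGraph.degree, h]
  rw [Finset.card_insert_of_notMem (by simp), Finset.card_singleton]

lemma rhs_eq_monomial (n : ℕ) :
    (2 * n : Polynomial ℤ) * Polynomial.X ^ (2 * n - 1) + Polynomial.X
      = Polynomial.monomial (2 * n - 1) (2 * n : ℤ) + Polynomial.monomial 1 (1 : ℤ) := by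
  have h : (2 * n : Polynomial ℤ) = Polynomial.C (2 * n : ℤ) := by
    rw [map_mul, map_ofNat, Polynomial.C_eq_natCast]
  rw [h, Polynomial.C_mul_X_pow_eq_monomial, ← Polynomial.monomial_one_one_eq_X]

theorem forward (n : ℕ) (hn : 1 ≤ n) :
    (da (friendshipGraph n)).coeff 1
        = (2 * n : Polynomial ℤ) * Polynomial.X ^ (2 * n - 1) + Polynomial.X := by
  rw [coeff_one_da, card_friendship, Fintype.sum_option, friendship_degree_none,
    rhs_eq_monomial]
  have h2 : ∀ x : Fin n × Bool, (friendshipGraph n).degree (some x) = 2 :=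
    fun x => friendship_degree_some n x.1 x.2
  simp only [h2]
  rw [Finset.sum_const, Finset.card_univ]
  have hc : Fintype.card (Fin n × Bool) = 2 * n := by simp [mul_comm]
  have e1 : 2 * n + 1 - 2 * n = 1 := by omega
  have e2 : 2 * n + 1 - 2 = 2 * n - 1 := by omega
  rw [hc, e1, e2, nsmul_eq_mul, ← Polynomial.C_eq_natCast, Polynomial.C_mul_monomial, mul_one]
  push_cast
  exact add_comm _ _

theorem converse (n : ℕ) (hn : 1 ≤ n) (W : Type) [Fintype W] (H : SimpleGraph W)
    (h : (da H).coeff 1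
        = (2 * n : Polynomial ℤ) * Polynomial.X ^ (2 * n - 1) + Polynomial.X) :
    Fintype.card W = 2 * n + 1
      ∧ ∃ v₀ : W, H.degree v₀ = 2 * n ∧ ∀ v ≠ v₀, H.degree v = 2 := by
  rw [coeff_one_da, rhs_eq_monomial] at h
  have hW : Fintype.card W = 2 * n + 1 := by
    have h1 := congrArg (Polynomial.eval 1) h
    simp [Polynomial.eval_finset_sum, Polynomial.eval_monomial] at h1
    exact_mod_cast h1
  have hdlt : ∀ v : W, H.degree v < Fintype.card W := fun v => H.degree_lt_card_verts v
  have hcoeff : ∀ k, (((Finset.univ.filter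
        (fun v : W => Fintype.card W - H.degree v = k)).card : ℤ))
      = (if 2 * n - 1 = k then (2 * n : ℤ) else 0) + (if 1 = k then 1 else 0) := by
    intro k
    have h2 := congrArg (fun p => Polynomial.coeff p k) h
    simp only [Polynomial.finset_sum_coeff, Polynomial.coeff_add,
      Polynomial.coeff_monomial] at h2
    rw [Finset.sum_boole] at h2
    exact h2
  refine ⟨hW, ?_⟩
  by_cases hn1 : 2 * n - 1 = 1
  · -- n = 1
    have hn' : n = 1 := by omega
    have hA := hcoeff 1
    rw [if_pos hn1, if_pos rfl] at hA
    have hAcard : (Finset.univ.filter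
        (fun v : W => Fintype.card W - H.degree v = 1)).card = Fintype.card W := by
      have : ((2 * n : ℤ) + 1) = ((2 * n + 1 : ℕ) : ℤ) := by push_cast; ring
      rw [this, ← hW] at hA
      exact_mod_cast hA
    have hall : ∀ v : W, H.degree v = 2 := by
      intro v
      have hv : v ∈ Finset.univ.filter (fun v : W => Fintype.card W - H.degree v = 1) := by
        rw [Finset.eq_univ_of_card _ hAcard]
        exact Finset.mem_univ v
      have := (Finset.mem_filter.mp hv).2
      have := hdlt v
      omega
    obtain ⟨v₀⟩ : Nonempty W := Fintype.card_pos_iff.mp (by omega)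
    exact ⟨v₀, by rw [hall v₀]; omega, fun v _ => hall v⟩
  · -- n ≥ 2
    set A := Finset.univ.filter (fun v : W => Fintype.card W - H.degree v = 1) with hAdef
    set B := Finset.univ.filter
        (fun v : W => Fintype.card W - H.degree v = 2 * n - 1) with hBdef
    have hA : A.card = 1 := by
      have := hcoeff 1
      rw [if_neg hn1, if_pos rfl, zero_add] at this
      exact_mod_cast this
    have hB : B.card = 2 * n := by
      have := hcoeff (2 * n - 1)
      rw [if_pos rfl, if_neg (fun hh => hn1 hh.symm), add_zero] at this
      exact_mod_cast this
    obtain ⟨v₀, hv₀⟩ := Finset.card_eq_one.mp hA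
    have hv₀1 : Fintype.card W - H.degree v₀ = 1 := by
      have : v₀ ∈ A := hv₀ ▸ Finset.mem_singleton_self v₀
      exact (Finset.mem_filter.mp this).2
    have hd₀ : H.degree v₀ = 2 * n := by have := hdlt v₀; omega
    refine ⟨v₀, hd₀, fun v hv => ?_⟩
    have hdisj : Disjoint A B := by
      rw [Finset.disjoint_left]
      intro x hxA hxB
      have h1 := (Finset.mem_filter.mp hxA).2
      have h2 := (Finset.mem_filter.mp hxB).2
      omega
    have hunion : A ∪ B = Finset.univ := by
      apply Finset.eq_univ_of_card
      rw [Finset.card_union_of_disjoint hdisj, hA, hB]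
      omega
    have hvB : v ∈ B := by
      have : v ∈ A ∪ B := hunion ▸ Finset.mem_univ v
      rcases Finset.mem_union.mp this with hvA | hvB
      · exact absurd (hv₀ ▸ hvA) (by simp [hv])
      · exact hvB
    have := (Finset.mem_filter.mp hvB).2
    have := hdlt v
    omega

/-- `[x] da(Fₙ; x, y) = 2n·y^{2n-1} + y`; conversely any graph `H` with this coefficient
has `2n + 1` vertices, one of degree `2n` and all others of degree `2`. -/
theorem stmt19 (n : ℕ) (hn : 1 ≤ n) :
    (da (friendshipGraph n)).coeff 1
        = (2 * n : Polynomial ℤ) * Polynomial.X ^ (2 * n - 1) + Polynomial.X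
    ∧ ∀ (W : Type) [Fintype W] (H : SimpleGraph W),
        (da H).coeff 1
            = (2 * n : Polynomial ℤ) * Polynomial.X ^ (2 * n - 1) + Polynomial.X →
        Fintype.card W = 2 * n + 1
          ∧ ∃ v₀ : W, H.degree v₀ = 2 * n ∧ ∀ v ≠ v₀, H.degree v = 2 :=
  ⟨forward n hn, fun W _ H h => converse n hn W H h⟩
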